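/- For every k ≥ 0, with J̄_k := J*⁻¹(J_k − J*), Broyden's 'good' update satisfies σ_{k+1}² ≤ σ_k² − ‖J*⁻¹(J_k − B_k)u_k‖²/‖u_k‖² + 2(σ_k‖J̄_k‖ + ‖J̄_k‖²). -/

import Mathlib

/-!
Write `E = J*⁻¹(B_k − J*)`, `G = J*⁻¹(J_k − J*)` and `u = u_k`. Since `y_k = J_k u`, the update
reads `J*⁻¹(B_{k+1} − J*) = E + c uᵀ/‖u‖²` with `c = (G − E)u`. Expanding the Frobenius norm,
`σ_{k+1}² = σ_k² + (2⟨c, Eu⟩ + ‖c‖²)/‖u‖² = σ_k² − ‖c‖²/‖u‖² + 2⟨c, Gu⟩/‖u‖²`, and by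
Cauchy–Schwarz `⟨c, Gu⟩ = ‖Gu‖² − ⟨Eu, Gu⟩ ≤ (‖G‖² + σ_k‖G‖)‖u‖²`.
-/

open Matrix MeasureTheory

noncomputable def specNorm {n : ℕ} (A : Matrix (Fin n) (Fin n) ℝ) : ℝ :=
  ‖Matrix.toEuclideanCLM (𝕜 := ℝ) A‖

noncomputable def frobNorm {n : ℕ} (A : Matrix (Fin n) (Fin n) ℝ) : ℝ :=
  Real.sqrt (∑ i, ∑ j, (A i j) ^ 2)

noncomputable def vnorm {n : ℕ} (x : Fin n → ℝ) : ℝ :=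
  Real.sqrt (∑ i, (x i) ^ 2)

noncomputable def intJac {n : ℕ} (J : (Fin n → ℝ) → Matrix (Fin n) (Fin n) ℝ)
    (x u : Fin n → ℝ) : Matrix (Fin n) (Fin n) ℝ :=
  Matrix.of fun i j => ∫ t in (0:ℝ)..(1:ℝ), J (x + t • u) i j

section

variable {n : ℕ}

lemma vnorm_eq_norm_toLp (v : Fin n → ℝ) : vnorm v = ‖WithLp.toLp 2 v‖ := by
  simp [vnorm, EuclideanSpace.norm_eq]

lemma vnorm_nonneg (v : Fin n → ℝ) : 0 ≤ vnorm v := Real.sqrt_nonneg _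

lemma vnorm_sq (v : Fin n → ℝ) : vnorm v ^ 2 = v ⬝ᵥ v := by
  rw [vnorm, Real.sq_sqrt (by positivity)]
  simp only [dotProduct, sq]

lemma abs_dotProduct_le (v w : Fin n → ℝ) : |v ⬝ᵥ w| ≤ vnorm v * vnorm w := by
  rw [vnorm_eq_norm_toLp, vnorm_eq_norm_toLp, dotProduct_comm]
  simpa [EuclideanSpace.inner_toLp_toLp] using
    abs_real_inner_le_norm (WithLp.toLp 2 v) (WithLp.toLp 2 w)

lemma vnorm_mulVec_le_specNorm (A : Matrix (Fin n) (Fin n) ℝ) (u : Fin n → ℝ) :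
    vnorm (A *ᵥ u) ≤ specNorm A * vnorm u := by
  simpa [vnorm_eq_norm_toLp, specNorm] using
    (toEuclideanCLM (𝕜 := ℝ) A).le_opNorm (WithLp.toLp 2 u)

lemma frobNorm_sq (A : Matrix (Fin n) (Fin n) ℝ) : frobNorm A ^ 2 = ∑ i, A i ⬝ᵥ A i := by
  rw [frobNorm, Real.sq_sqrt (by positivity)]
  simp only [dotProduct, sq]

lemma vnorm_mulVec_le_frobNorm (A : Matrix (Fin n) (Fin n) ℝ) (u : Fin n → ℝ) :
    vnorm (A *ᵥ u) ≤ frobNorm A * vnorm u := by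
  have hsq : vnorm (A *ᵥ u) ^ 2 ≤ (frobNorm A * vnorm u) ^ 2 := by
    rw [mul_pow, vnorm_sq, frobNorm_sq, vnorm_sq, Finset.sum_mul]
    refine Finset.sum_le_sum fun i _ => ?_
    have h := pow_le_pow_left₀ (abs_nonneg _) (abs_dotProduct_le (A i) u) 2
    rwa [sq_abs, mul_pow, vnorm_sq, vnorm_sq, sq] at h
  exact le_of_pow_le_pow_left₀ two_ne_zero (mul_nonneg (Real.sqrt_nonneg _) (vnorm_nonneg u)) hsq

lemma frobNorm_add_smul_vecMulVec_sq (E : Matrix (Fin n) (Fin n) ℝ) (t : ℝ) (w v : Fin n → ℝ) :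
    frobNorm (E + t • vecMulVec w v) ^ 2
      = frobNorm E ^ 2 + 2 * t * (w ⬝ᵥ E *ᵥ v) + t ^ 2 * (w ⬝ᵥ w) * (v ⬝ᵥ v) := by
  have hrow : ∀ i, (E + t • vecMulVec w v) i ⬝ᵥ (E + t • vecMulVec w v) i
      = E i ⬝ᵥ E i + 2 * t * (w i * (E i ⬝ᵥ v)) + t ^ 2 * (w i * w i) * (v ⬝ᵥ v) := fun i => by
    have : (E + t • vecMulVec w v) i = E i + (t * w i) • v := by
      ext j; simp [vecMulVec_apply, mul_assoc]
    simp only [this, add_dotProduct, dotProduct_add, dotProduct_smul, smul_dotProduct, smul_eq_mul,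
      dotProduct_comm v]
    ring
  simp only [frobNorm_sq, hrow, Finset.sum_add_distrib, ← Finset.mul_sum, ← Finset.sum_mul]
  rfl

theorem frobNorm_secant_update_sq_le (E G : Matrix (Fin n) (Fin n) ℝ) (u : Fin n → ℝ) :
    frobNorm (E + (u ⬝ᵥ u)⁻¹ • vecMulVec ((G - E) *ᵥ u) u) ^ 2 ≤
      frobNorm E ^ 2 - vnorm ((G - E) *ᵥ u) ^ 2 / vnorm u ^ 2
        + 2 * (frobNorm E * specNorm G + specNorm G ^ 2) := by
  rw [frobNorm_add_smul_vecMulVec_sq, vnorm_sq, vnorm_sq]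
  set σ := frobNorm E
  set θ := specNorm G
  set c := (G - E) *ᵥ u
  have hθ : 0 ≤ θ := norm_nonneg _
  have hσ : 0 ≤ σ := Real.sqrt_nonneg _
  rcases (vnorm_sq u ▸ sq_nonneg (vnorm u)).eq_or_lt with hs | hs
  -- `u = 0`: the junk values `0⁻¹ = 0` and `_ / 0 = 0` make the update trivial.
  · simp only [← hs, _root_.inv_zero, div_zero, mul_zero, zero_mul, add_zero, sub_zero]
    nlinarith
  have hcG : c ⬝ᵥ G *ᵥ u ≤ (σ * θ + θ ^ 2) * (u ⬝ᵥ u) := by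
    have hEG := (neg_abs_le _).trans' (neg_le_neg (abs_dotProduct_le (E *ᵥ u) (G *ᵥ u)))
    have hE := vnorm_mulVec_le_frobNorm E u
    have hG := vnorm_mulVec_le_specNorm G u
    have hG0 := vnorm_nonneg (G *ᵥ u)
    rw [show c ⬝ᵥ G *ᵥ u = vnorm (G *ᵥ u) ^ 2 - (E *ᵥ u) ⬝ᵥ G *ᵥ u by
      simp only [c, sub_mulVec, sub_dotProduct, vnorm_sq], ← vnorm_sq]
    calc vnorm (G *ᵥ u) ^ 2 - (E *ᵥ u) ⬝ᵥ G *ᵥ u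
        ≤ vnorm (G *ᵥ u) ^ 2 + vnorm (E *ᵥ u) * vnorm (G *ᵥ u) := by linarith
      _ ≤ (θ * vnorm u) ^ 2 + (σ * vnorm u) * (θ * vnorm u) := by
        have := vnorm_nonneg u
        gcongr
      _ = (σ * θ + θ ^ 2) * vnorm u ^ 2 := by ring
  have hcE : c ⬝ᵥ E *ᵥ u = c ⬝ᵥ G *ᵥ u - c ⬝ᵥ c := by
    simp only [c, sub_mulVec, dotProduct_sub]; ring
  calc σ ^ 2 + 2 * (u ⬝ᵥ u)⁻¹ * (c ⬝ᵥ E *ᵥ u) + (u ⬝ᵥ u)⁻¹ ^ 2 * (c ⬝ᵥ c) * (u ⬝ᵥ u)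
      = σ ^ 2 - c ⬝ᵥ c / u ⬝ᵥ u + 2 * (c ⬝ᵥ G *ᵥ u / u ⬝ᵥ u) := by
        rw [hcE]; field_simp; ring
    _ ≤ σ ^ 2 - c ⬝ᵥ c / u ⬝ᵥ u + 2 * (σ * θ + θ ^ 2) := by
        gcongr; exact (div_le_iff₀ hs).mpr hcG

theorem sub_eq_intJac_mulVec {F : (Fin n → ℝ) → (Fin n → ℝ)}
    {J : (Fin n → ℝ) → Matrix (Fin n) (Fin n) ℝ}
    (hF : ∀ z, HasFDerivAt F (LinearMap.toContinuousLinearMap ((J z).mulVecLin)) z)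
    (hJ : Continuous J) (x u : Fin n → ℝ) :
    F (x + u) - F x = intJac J x u *ᵥ u := by
  have hline : ∀ t : ℝ, HasDerivAt (fun t : ℝ => F (x + t • u)) (J (x + t • u) *ᵥ u) t :=
    fun t => by
      simpa [Function.comp_def] using
        (hF _).comp_hasDerivAt t (((hasDerivAt_id t).smul_const u).const_add x)
  have hentry : ∀ i j, Continuous fun t : ℝ => J (x + t • u) i j := by fun_prop
  have hcont : Continuous fun t : ℝ => J (x + t • u) *ᵥ u :=
    (hJ.comp (by fun_prop)).matrix_mulVec continuous_const
  funext i
  have hFTC := intervalIntegral.integral_eq_sub_of_hasDerivAt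
    (fun t _ => hasDerivAt_pi.mp (hline t) i)
    (((continuous_apply i).comp hcont).intervalIntegrable 0 1)
  rw [one_smul, zero_smul, add_zero] at hFTC
  rw [Pi.sub_apply, ← hFTC]
  simp only [mulVec, dotProduct, intJac, of_apply]
  rw [intervalIntegral.integral_finsetSum (f := fun j t => J (x + t • u) i j * u j)
    fun j _ => ((hentry i j).mul continuous_const).intervalIntegrable 0 1]
  simp only [intervalIntegral.integral_mul_const]

end

theorem stmt3_general {n : ℕ} (F : (Fin n → ℝ) → (Fin n → ℝ))
    (J : (Fin n → ℝ) → Matrix (Fin n) (Fin n) ℝ)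
    (hF : ∀ z, HasFDerivAt F (LinearMap.toContinuousLinearMap ((J z).mulVecLin)) z)
    (hJc : Continuous J)
    (xs : Fin n → ℝ)
    (x : ℕ → Fin n → ℝ) (B : ℕ → Matrix (Fin n) (Fin n) ℝ)
    (hB : ∀ k, B (k + 1) = B k + ((x (k + 1) - x k) ⬝ᵥ (x (k + 1) - x k))⁻¹ •
        vecMulVec (F (x (k + 1)) - F (x k) - B k *ᵥ (x (k + 1) - x k)) (x (k + 1) - x k)) :
    ∀ k : ℕ,
      frobNorm ((J xs)⁻¹ * (B (k + 1) - J xs)) ^ 2 ≤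
        frobNorm ((J xs)⁻¹ * (B k - J xs)) ^ 2
          - vnorm ((J xs)⁻¹ *ᵥ ((intJac J (x k) (x (k + 1) - x k) - B k) *ᵥ (x (k + 1) - x k))) ^ 2
              / vnorm (x (k + 1) - x k) ^ 2
          + 2 * (frobNorm ((J xs)⁻¹ * (B k - J xs)) *
                specNorm ((J xs)⁻¹ * (intJac J (x k) (x (k + 1) - x k) - J xs))
              + specNorm ((J xs)⁻¹ * (intJac J (x k) (x (k + 1) - x k) - J xs)) ^ 2) := by
  intro k
  set u := x (k + 1) - x k
  set Jk := intJac J (x k) u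
  have hy : F (x (k + 1)) - F (x k) = Jk *ᵥ u := by
    simpa [u] using sub_eq_intJac_mulVec hF hJc (x k) u
  have hres : (J xs)⁻¹ *ᵥ ((Jk - B k) *ᵥ u)
      = ((J xs)⁻¹ * (Jk - J xs) - (J xs)⁻¹ * (B k - J xs)) *ᵥ u := by
    rw [← Matrix.mul_sub, sub_sub_sub_cancel_right, mulVec_mulVec]
  have hupdate : (J xs)⁻¹ * (B (k + 1) - J xs) = (J xs)⁻¹ * (B k - J xs)
      + (u ⬝ᵥ u)⁻¹ • vecMulVec (((J xs)⁻¹ * (Jk - J xs) - (J xs)⁻¹ * (B k - J xs)) *ᵥ u) u := by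
    rw [hB k, ← hres, hy, ← sub_mulVec, add_sub_right_comm, Matrix.mul_add, Matrix.mul_smul,
      Matrix.mul_vecMulVec]
  rw [hupdate, hres]
  exact frobNorm_secant_update_sq_le _ _ u

/-- One-step Frobenius-measure inequality for Broyden's "good" update:
`σ_{k+1}² ≤ σ_k² − ‖J*⁻¹(J_k − B_k)u_k‖²/‖u_k‖² + 2(σ_k‖J̄_k‖ + ‖J̄_k‖²)`. -/
theorem stmt3 {n : ℕ} (F : (Fin n → ℝ) → (Fin n → ℝ))
    (J : (Fin n → ℝ) → Matrix (Fin n) (Fin n) ℝ)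
    (hF : ∀ z, HasFDerivAt F (LinearMap.toContinuousLinearMap ((J z).mulVecLin)) z)
    (hJc : Continuous J)
    (xs : Fin n → ℝ) (hxs : F xs = 0) (hJs : IsUnit (J xs).det)
    (x : ℕ → Fin n → ℝ) (B : ℕ → Matrix (Fin n) (Fin n) ℝ)
    (hBk : ∀ k, IsUnit (B k).det) (hFk : ∀ k, F (x k) ≠ 0)
    (hx : ∀ k, x (k + 1) = x k - (B k)⁻¹ *ᵥ F (x k))
    (hB : ∀ k, B (k + 1) = B k + ((x (k + 1) - x k) ⬝ᵥ (x (k + 1) - x k))⁻¹ •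
        vecMulVec (F (x (k + 1)) - F (x k) - B k *ᵥ (x (k + 1) - x k)) (x (k + 1) - x k)) :
    ∀ k : ℕ,
      frobNorm ((J xs)⁻¹ * (B (k + 1) - J xs)) ^ 2 ≤
        frobNorm ((J xs)⁻¹ * (B k - J xs)) ^ 2
          - vnorm ((J xs)⁻¹ *ᵥ ((intJac J (x k) (x (k + 1) - x k) - B k) *ᵥ (x (k + 1) - x k))) ^ 2
              / vnorm (x (k + 1) - x k) ^ 2
          + 2 * (frobNorm ((J xs)⁻¹ * (B k - J xs)) *
                specNorm ((J xs)⁻¹ * (intJac J (x k) (x (k + 1) - x k) - J xs))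
              + specNorm ((J xs)⁻¹ * (intJac J (x k) (x (k + 1) - x k) - J xs)) ^ 2) :=
  stmt3_general F J hF hJc xs x B hB
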